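/- In the setting where ρ: A → U(V) is irreducible unitary with all conjugates g · ρ equivalent to ρ, σ a section with σ(1)=1, M_q unitaries with M_1 = 1 and ρ(σ(q)⁻¹ a σ(q)) = M_q⁻¹ ρ(a) M_q, and θ: G → U(W) a unitary representation of G: set F := Hom_A(V,W) with q • f := θ(σ(q)) ∘ f ∘ M_q⁻¹, and define for g ∈ G the operator on V ⊗ F determined by g · (v ⊗ f) := (M_{π(g)} ρ(σ(π(g))⁻¹ g) v) ⊗ (π(g) • f). Then the evaluation map β: V ⊗ F → W, v ⊗ f ↦ f(v), intertwines this action with θ: β(g · (v ⊗ f)) = θ(g)(f(v)) for every g ∈ G, v ∈ V and f ∈ F. -/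
import Mathlib


open scoped TensorProduct

/-- Conjugation of an element of a normal subgroup `A` by `g : G`:
`conjElem A g a = g⁻¹ * a * g`, viewed as an element of `A`. -/
def conjElem {G : Type*} [Group G] (A : Subgroup G) [hA : A.Normal] (g : G) (a : A) : A :=
  ⟨g⁻¹ * a * g, by simpa using hA.conj_mem a.1 a.2 g⁻¹⟩

/-- `ψ(q)(a) := σ(q)⁻¹ a σ(q)`, as an element of the normal subgroup `A`. -/
def psi {G : Type*} [Group G] (A : Subgroup G) [hA : A.Normal] (σ : G ⧸ A → G)
    (q : G ⧸ A) (a : A) : A :=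
  ⟨(σ q)⁻¹ * a * σ q, by simpa using hA.conj_mem a.1 a.2 (σ q)⁻¹⟩

/-- `σ(π(g))⁻¹ g`, as an element of the normal subgroup `A`. -/
def secRem {G : Type*} [Group G] (A : Subgroup G) [A.Normal] (σ : G ⧸ A → G)
    (hσ : ∀ q, QuotientGroup.mk' A (σ q) = q) (g : G) : A :=
  ⟨(σ (QuotientGroup.mk' A g))⁻¹ * g, by
    have h : QuotientGroup.mk' A ((σ (QuotientGroup.mk' A g))⁻¹ * g) = 1 := by
      rw [map_mul, map_inv, hσ]; group
    simpa using (QuotientGroup.eq_one_iff _).mp h⟩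

/-- A unitary representation `ρ : H → U(V)` is irreducible if the only subspaces of `V`
invariant under all `ρ(h)` are `0` and `V`. -/
def IsIrreducibleUnitaryRep {H : Type*} [Group H] {V : Type*} [NormedAddCommGroup V]
    [InnerProductSpace ℂ V] [FiniteDimensional ℂ V]
    (ρ : H →* unitary (V →L[ℂ] V)) : Prop :=
  ∀ W : Submodule ℂ V, (∀ h : H, ∀ v ∈ W, ((ρ h : V →L[ℂ] V) v) ∈ W) → W = ⊥ ∨ W = ⊤

/-- The action `q • f := θ(σ(q)) ∘ f ∘ M_q⁻¹` on linear maps `f : V → W`. -/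
noncomputable def qBullet {G : Type*} [Group G] (A : Subgroup G) [A.Normal]
    {V W : Type*} [NormedAddCommGroup V] [InnerProductSpace ℂ V] [FiniteDimensional ℂ V]
    [NormedAddCommGroup W] [InnerProductSpace ℂ W] [FiniteDimensional ℂ W]
    (θ : G →* unitary (W →L[ℂ] W)) (σ : G ⧸ A → G)
    (M : G ⧸ A → unitary (V →L[ℂ] V)) (q : G ⧸ A) (f : V →L[ℂ] W) : V →L[ℂ] W :=
  (((θ (σ q)) : W →L[ℂ] W).comp f).comp (((M q)⁻¹ : unitary (V →L[ℂ] V)) : V →L[ℂ] V)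

/-- The evaluation map `β : V ⊗ Hom(V,W) → W`, `v ⊗ f ↦ f(v)`. -/
noncomputable def evalBeta {V W : Type*}
    [NormedAddCommGroup V] [InnerProductSpace ℂ V] [FiniteDimensional ℂ V]
    [NormedAddCommGroup W] [InnerProductSpace ℂ W] [FiniteDimensional ℂ W] :
    V ⊗[ℂ] (V →L[ℂ] W) →ₗ[ℂ] W :=
  TensorProduct.lift <| LinearMap.mk₂ ℂ (fun v f => f v)
    (by intro v v' f; simp) (by intro c v f; simp)
    (by intro v f g; rfl) (by intro c v f; rfl)

/-- In the setting where `ρ : A → U(V)` is an irreducible unitary representation of a normal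
subgroup `A` of a finite group `G`, all of whose `G`-conjugates are unitarily equivalent to
`ρ`, `σ` a section of `π : G → Q = G/A` with `σ(1) = 1`, `M_q` unitaries with `M_1 = 1` and
`ρ(σ(q)⁻¹ a σ(q)) = M_q⁻¹ ρ(a) M_q`, and `θ : G → U(W)` a unitary representation of `G`:
set `F := Hom_A(V,W)` with `q • f := θ(σ(q)) ∘ f ∘ M_q⁻¹`, and define for `g ∈ G` the
operator on `V ⊗ F` determined by
`g · (v ⊗ f) := (M_{π(g)} ρ(σ(π(g))⁻¹ g) v) ⊗ (π(g) • f)`.  Then the evaluation map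
`β : V ⊗ F → W`, `v ⊗ f ↦ f(v)`, intertwines this action with `θ`:
`β(g · (v ⊗ f)) = θ(g)(f(v))` for every `g ∈ G`, `v ∈ V` and `f ∈ F`. -/
theorem evalBeta_intertwines
    {G : Type*} [Group G] [Finite G] (A : Subgroup G) [A.Normal]
    {V W : Type*} [NormedAddCommGroup V] [InnerProductSpace ℂ V]
    [FiniteDimensional ℂ V] [Nontrivial V]
    [NormedAddCommGroup W] [InnerProductSpace ℂ W] [FiniteDimensional ℂ W]
    (ρ : A →* unitary (V →L[ℂ] V)) (hirr : IsIrreducibleUnitaryRep ρ)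
    (hconjall : ∀ g : G, ∃ N : unitary (V →L[ℂ] V),
      ∀ a : A, ρ (conjElem A g a) = N⁻¹ * ρ a * N)
    (σ : G ⧸ A → G) (hσ : ∀ q, QuotientGroup.mk' A (σ q) = q) (hσ1 : σ 1 = 1)
    (M : G ⧸ A → unitary (V →L[ℂ] V)) (hM1 : M 1 = 1)
    (hMconj : ∀ (q : G ⧸ A) (a : A), ρ (psi A σ q a) = (M q)⁻¹ * ρ a * M q)
    (θ : G →* unitary (W →L[ℂ] W)) :
    ∀ (g : G) (v : V) (f : V →L[ℂ] W),
      (∀ a : A, f.comp ((ρ a : V →L[ℂ] V)) = ((θ (a : G)) : W →L[ℂ] W).comp f) →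
      evalBeta
          ((((M (QuotientGroup.mk' A g)) : V →L[ℂ] V)
              (((ρ (secRem A σ hσ g)) : V →L[ℂ] V) v)) ⊗ₜ[ℂ]
            qBullet A θ σ M (QuotientGroup.mk' A g) f) =
        ((θ g : W →L[ℂ] W)) (f v) := by
  intro g v f hf
  set q := QuotientGroup.mk' A g with hq
  have key : ∀ x : V, (((M q)⁻¹ : unitary (V →L[ℂ] V)) : V →L[ℂ] V)
      (((M q) : V →L[ℂ] V) x) = x := by
    intro x
    have h : (((M q)⁻¹ : unitary (V →L[ℂ] V)) : V →L[ℂ] V) *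
        ((M q : unitary (V →L[ℂ] V)) : V →L[ℂ] V) = 1 := by
      rw [← MulMemClass.coe_mul, inv_mul_cancel]; rfl
    calc (((M q)⁻¹ : unitary (V →L[ℂ] V)) : V →L[ℂ] V) (((M q) : V →L[ℂ] V) x)
        = ((((M q)⁻¹ : unitary (V →L[ℂ] V)) : V →L[ℂ] V) *
            ((M q : unitary (V →L[ℂ] V)) : V →L[ℂ] V)) x := rfl
      _ = (1 : V →L[ℂ] V) x := by rw [h]
      _ = x := rfl
  have h1 : evalBeta
      ((((M q) : V →L[ℂ] V) (((ρ (secRem A σ hσ g)) : V →L[ℂ] V) v)) ⊗ₜ[ℂ]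
        qBullet A θ σ M q f) =
      ((θ (σ q) : W →L[ℂ] W)) (f (((ρ (secRem A σ hσ g)) : V →L[ℂ] V) v)) := by
    have e1 : evalBeta
        ((((M q) : V →L[ℂ] V) (((ρ (secRem A σ hσ g)) : V →L[ℂ] V) v)) ⊗ₜ[ℂ]
          qBullet A θ σ M q f) =
        qBullet A θ σ M q f
          (((M q) : V →L[ℂ] V) (((ρ (secRem A σ hσ g)) : V →L[ℂ] V) v)) := rfl
    rw [e1]
    show ((θ (σ q) : W →L[ℂ] W))
        (f ((((M q)⁻¹ : unitary (V →L[ℂ] V)) : V →L[ℂ] V)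
          (((M q) : V →L[ℂ] V) (((ρ (secRem A σ hσ g)) : V →L[ℂ] V) v)))) = _
    rw [key]
  rw [h1]
  have h2 : f (((ρ (secRem A σ hσ g)) : V →L[ℂ] V) v)
      = ((θ ((secRem A σ hσ g : A) : G) : W →L[ℂ] W)) (f v) := by
    have := congrArg (fun T : V →L[ℂ] W => T v) (hf (secRem A σ hσ g))
    simpa using this
  rw [h2]
  have h3 : σ q * ((secRem A σ hσ g : A) : G) = g := by
    simp [secRem, hq]
  have h4 := congrArg (fun u : unitary (W →L[ℂ] W) => (u : W →L[ℂ] W) (f v))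
    (congrArg θ h3)
  simpa [map_mul, ContinuousLinearMap.mul_apply] using h4
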